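/- arXiv:1806.09641 — 10 statements merged into one kernel-verified Lean document; each statement's English description precedes it below -/
import Mathlib

section
/- Let X be an n×n real matrix written in block form X = [[X₁, X_E], [-X_F, X₄]] where X₁ is s×s (1 ≤ s < n), the off-diagonal blocks X_E (s×(n-s)) and X_F ((n-s)×s) have all entries nonnegative, and at least one of X_E, X_F has a nonzero entry. If λ is a real eigenvalue of X with a corresponding positive left eigenvector [uᵀ vᵀ] and a positive right eigenvector [y; z] (with u, y of size s and v, z of size n-s), then a contradiction arises; hence X has no real eigenvalue with both left and right positive eigenvectors. -/
open Polynomial Matrix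

/-- A real square matrix is algebraically positive if some real polynomial
applied to it has all entries strictly positive. -/
def AlgPos {m : Type*} [Fintype m] [DecidableEq m] (A : Matrix m m ℝ) : Prop :=
  ∃ p : Polynomial ℝ, ∀ i j, 0 < (Polynomial.aeval A p) i j

theorem no_positive_eigvecs_block {s t : ℕ} (hs : 0 < s) (ht : 0 < t)
    (X₁ : Matrix (Fin s) (Fin s) ℝ) (XE : Matrix (Fin s) (Fin t) ℝ)
    (XF : Matrix (Fin t) (Fin s) ℝ) (X₄ : Matrix (Fin t) (Fin t) ℝ)
    (hE : ∀ i j, 0 ≤ XE i j) (hF : ∀ i j, 0 ≤ XF i j)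
    (hnz : (∃ i j, XE i j ≠ 0) ∨ (∃ i j, XF i j ≠ 0))
    (lam : ℝ) (w r : Fin s ⊕ Fin t → ℝ)
    (hw : ∀ i, 0 < w i) (hr : ∀ i, 0 < r i)
    (hleft : Matrix.vecMul w (Matrix.fromBlocks X₁ XE (-XF) X₄) = lam • w)
    (hright : (Matrix.fromBlocks X₁ XE (-XF) X₄).mulVec r = lam • r) :
    False := by
  have hL : ∀ j : Fin s,
      (∑ i, w (Sum.inl i) * X₁ i j) + -(∑ i, w (Sum.inr i) * XF i j)
        = lam * w (Sum.inl j) := by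
    intro j
    have := congrFun hleft (Sum.inl j)
    simpa [vecMul, dotProduct, Fintype.sum_sum_type, fromBlocks] using this
  have hR : ∀ j : Fin s,
      (∑ k, X₁ j k * r (Sum.inl k)) + (∑ k, XE j k * r (Sum.inr k))
        = lam * r (Sum.inl j) := by
    intro j
    have := congrFun hright (Sum.inl j)
    simpa [mulVec, dotProduct, Fintype.sum_sum_type, fromBlocks] using this
  set TF : ℝ := ∑ j, (∑ i, w (Sum.inr i) * XF i j) * r (Sum.inl j) with hTF
  set TE : ℝ := ∑ j, w (Sum.inl j) * (∑ k, XE j k * r (Sum.inr k)) with hTE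
  have key : TF + TE = 0 := by
    have h1 : ∑ j, ((∑ i, w (Sum.inl i) * X₁ i j) + -(∑ i, w (Sum.inr i) * XF i j))
          * r (Sum.inl j)
        = ∑ j, w (Sum.inl j) *
          ((∑ k, X₁ j k * r (Sum.inl k)) + (∑ k, XE j k * r (Sum.inr k))) := by
      simp only [hL, hR]
      exact Finset.sum_congr rfl fun j _ => by ring
    have h2 : ∑ j, (∑ i, w (Sum.inl i) * X₁ i j) * r (Sum.inl j)
        = ∑ j, w (Sum.inl j) * (∑ k, X₁ j k * r (Sum.inl k)) := by
      simp only [Finset.sum_mul, Finset.mul_sum]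
      rw [Finset.sum_comm]
      exact Finset.sum_congr rfl fun j _ => Finset.sum_congr rfl fun i _ => by ring
    simp only [add_mul, mul_add, Finset.sum_add_distrib, neg_mul, Finset.sum_neg_distrib] at h1
    rw [h2] at h1
    rw [hTF, hTE]
    linarith [h1]
  have hTFnn : 0 ≤ TF :=
    Finset.sum_nonneg fun j _ => mul_nonneg
      (Finset.sum_nonneg fun i _ => mul_nonneg (hw _).le (hF _ _)) (hr _).le
  have hTEnn : 0 ≤ TE :=
    Finset.sum_nonneg fun j _ => mul_nonneg (hw _).le
      (Finset.sum_nonneg fun k _ => mul_nonneg (hE _ _) (hr _).le)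
  have hTF0 : TF = 0 := le_antisymm (by linarith) hTFnn
  have hTE0 : TE = 0 := le_antisymm (by linarith) hTEnn
  rcases hnz with ⟨i, j, hij⟩ | ⟨i, j, hij⟩
  · have hpos : 0 < TE := by
      have hterm : 0 < w (Sum.inl i) * (∑ k, XE i k * r (Sum.inr k)) := by
        apply mul_pos (hw _)
        have : 0 < XE i j * r (Sum.inr j) :=
          mul_pos (lt_of_le_of_ne (hE i j) (Ne.symm hij)) (hr _)
        refine Finset.sum_pos' (fun k _ => mul_nonneg (hE _ _) (hr _).le) ⟨j, Finset.mem_univ j, this⟩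
      refine Finset.sum_pos' (fun k _ => mul_nonneg (hw _).le
        (Finset.sum_nonneg fun k _ => mul_nonneg (hE _ _) (hr _).le)) ⟨i, Finset.mem_univ i, hterm⟩
    exact absurd hTE0 (ne_of_gt hpos)
  · have hpos : 0 < TF := by
      have hterm : 0 < (∑ k, w (Sum.inr k) * XF k j) * r (Sum.inl j) := by
        apply mul_pos _ (hr _)
        have : 0 < w (Sum.inr i) * XF i j :=
          mul_pos (hw _) (lt_of_le_of_ne (hF i j) (Ne.symm hij))
        exact Finset.sum_pos' (fun k _ => mul_nonneg (hw _).le (hF _ _)) ⟨i, Finset.mem_univ i, this⟩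
      refine Finset.sum_pos' (fun k _ => mul_nonneg
        (Finset.sum_nonneg fun i _ => mul_nonneg (hw _).le (hF _ _)) (hr _).le)
        ⟨j, Finset.mem_univ j, hterm⟩
    exact absurd hTF0 (ne_of_gt hpos)
end

section
/- Let A be an n×n real matrix partitioned in block form A = [[A₁₁, A₁₂], [A₂₁, A₂₂]] where A₁₁ is s×s (1 ≤ s < n), all entries of A₁₂ are ≥ 0, all entries of A₂₁ are ≤ 0, and A₁₂ and A₂₁ are not both zero. Then A is not algebraically positive. -/
open Polynomial Matrix

theorem block_sign_not_algPos {s t : ℕ} (hs : 0 < s) (ht : 0 < t)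
    (A : Matrix (Fin s ⊕ Fin t) (Fin s ⊕ Fin t) ℝ)
    (h12 : ∀ i j, 0 ≤ A (Sum.inl i) (Sum.inr j))
    (h21 : ∀ i j, A (Sum.inr i) (Sum.inl j) ≤ 0)
    (hnz : (∃ i j, A (Sum.inl i) (Sum.inr j) ≠ 0) ∨
           (∃ i j, A (Sum.inr i) (Sum.inl j) ≠ 0)) :
    ¬ AlgPos A := by
  rintro ⟨p, hp⟩
  set P := Polynomial.aeval A p with hPdef
  have hcomm : A * P = P * A := by
    have h := (Commute.all p Polynomial.X).map (Polynomial.aeval A)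
    simpa [Commute, SemiconjBy, hPdef] using h.symm
  -- Compare the trace of the (1,1) block of A*P and P*A
  have h0 : ∑ i : Fin s, (A * P) (Sum.inl i) (Sum.inl i)
      = ∑ i : Fin s, (P * A) (Sum.inl i) (Sum.inl i) := by rw [hcomm]
  simp only [Matrix.mul_apply, Fintype.sum_sum_type] at h0
  rw [Finset.sum_add_distrib, Finset.sum_add_distrib] at h0
  have hswap : ∑ i : Fin s, ∑ k : Fin s,
      A (Sum.inl i) (Sum.inl k) * P (Sum.inl k) (Sum.inl i)
      = ∑ i : Fin s, ∑ k : Fin s,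
      P (Sum.inl i) (Sum.inl k) * A (Sum.inl k) (Sum.inl i) := by
    rw [Finset.sum_comm]
    simp [mul_comm]
  have key : ∑ i : Fin s, ∑ k : Fin t,
      A (Sum.inl i) (Sum.inr k) * P (Sum.inr k) (Sum.inl i)
      = ∑ i : Fin s, ∑ k : Fin t,
      P (Sum.inl i) (Sum.inr k) * A (Sum.inr k) (Sum.inl i) := by
    linarith [h0, hswap]
  have hge : (0:ℝ) ≤ ∑ i : Fin s, ∑ k : Fin t,
      A (Sum.inl i) (Sum.inr k) * P (Sum.inr k) (Sum.inl i) :=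
    Finset.sum_nonneg fun i _ => Finset.sum_nonneg fun k _ =>
      mul_nonneg (h12 i k) (hp _ _).le
  have hle : ∑ i : Fin s, ∑ k : Fin t,
      P (Sum.inl i) (Sum.inr k) * A (Sum.inr k) (Sum.inl i) ≤ 0 :=
    Finset.sum_nonpos fun i _ => Finset.sum_nonpos fun k _ =>
      mul_nonpos_of_nonneg_of_nonpos (hp _ _).le (h21 k i)
  rcases hnz with ⟨i, j, hij⟩ | ⟨i, j, hij⟩
  · have hterm : 0 < A (Sum.inl i) (Sum.inr j) * P (Sum.inr j) (Sum.inl i) :=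
      mul_pos (lt_of_le_of_ne (h12 i j) (Ne.symm hij)) (hp _ _)
    have h1 : A (Sum.inl i) (Sum.inr j) * P (Sum.inr j) (Sum.inl i)
        ≤ ∑ k : Fin t, A (Sum.inl i) (Sum.inr k) * P (Sum.inr k) (Sum.inl i) :=
      Finset.single_le_sum (fun k _ => mul_nonneg (h12 i k) (hp _ _).le)
        (Finset.mem_univ j)
    have h2 : ∑ k : Fin t, A (Sum.inl i) (Sum.inr k) * P (Sum.inr k) (Sum.inl i)
        ≤ ∑ i : Fin s, ∑ k : Fin t,
          A (Sum.inl i) (Sum.inr k) * P (Sum.inr k) (Sum.inl i) :=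
      Finset.single_le_sum
        (f := fun i => ∑ k : Fin t, A (Sum.inl i) (Sum.inr k) * P (Sum.inr k) (Sum.inl i))
        (fun i _ => Finset.sum_nonneg fun k _ =>
          mul_nonneg (h12 i k) (hp _ _).le) (Finset.mem_univ i)
    linarith
  · have hterm : P (Sum.inl j) (Sum.inr i) * A (Sum.inr i) (Sum.inl j) < 0 :=
      mul_neg_of_pos_of_neg (hp _ _) (lt_of_le_of_ne (h21 i j) hij)
    have h1 : ∑ k : Fin t, P (Sum.inl j) (Sum.inr k) * A (Sum.inr k) (Sum.inl j)
        ≤ P (Sum.inl j) (Sum.inr i) * A (Sum.inr i) (Sum.inl j) := by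
      have := Finset.single_le_sum
        (f := fun k => -(P (Sum.inl j) (Sum.inr k) * A (Sum.inr k) (Sum.inl j)))
        (fun k _ => by
          show (0:ℝ) ≤ -(P (Sum.inl j) (Sum.inr k) * A (Sum.inr k) (Sum.inl j))
          have := mul_nonpos_of_nonneg_of_nonpos (hp (Sum.inl j) (Sum.inr k)).le (h21 k j)
          linarith) (Finset.mem_univ i)
      simp only [Finset.sum_neg_distrib] at this
      linarith
    have h2 : ∑ i : Fin s, ∑ k : Fin t,
        P (Sum.inl i) (Sum.inr k) * A (Sum.inr k) (Sum.inl i)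
        ≤ ∑ k : Fin t, P (Sum.inl j) (Sum.inr k) * A (Sum.inr k) (Sum.inl j) := by
      have := Finset.single_le_sum
        (f := fun i => -(∑ k : Fin t, P (Sum.inl i) (Sum.inr k) * A (Sum.inr k) (Sum.inl i)))
        (fun i _ => by
          show (0:ℝ) ≤ -∑ k : Fin t, P (Sum.inl i) (Sum.inr k) * A (Sum.inr k) (Sum.inl i)
          have : ∑ k : Fin t, P (Sum.inl i) (Sum.inr k) * A (Sum.inr k) (Sum.inl i) ≤ 0 :=
            Finset.sum_nonpos fun k _ =>
              mul_nonpos_of_nonneg_of_nonpos (hp _ _).le (h21 k i)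
          linarith) (Finset.mem_univ j)
      simp only [Finset.sum_neg_distrib] at this
      linarith
    linarith
end

section
/- Let A be a 3×3 real matrix with a₁₁ > 0, a₁₂ < 0, a₂₁ < 0, a₂₃ > 0, a₃₂ > 0, and all other entries zero. Then there exist real numbers k₀, k₁, k₂ with k₂ < 0, k₁ > 0, k₁/k₂ > -a₁₁ such that every entry of k₂A² + k₁A + k₀I is strictly positive; in particular A is algebraically positive. -/
set_option maxHeartbeats 1000000

open Polynomial Matrix

theorem sp64_algPos (A : Matrix (Fin 3) (Fin 3) ℝ)
    (h11 : 0 < A 0 0) (h12 : A 0 1 < 0) (h21 : A 1 0 < 0)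
    (h23 : 0 < A 1 2) (h32 : 0 < A 2 1)
    (h13 : A 0 2 = 0) (h22 : A 1 1 = 0) (h31 : A 2 0 = 0) (h33 : A 2 2 = 0) :
    (∃ k₀ k₁ k₂ : ℝ, k₂ < 0 ∧ 0 < k₁ ∧ k₁ / k₂ > -A 0 0 ∧
      ∀ i j, 0 < (k₂ • A ^ 2 + k₁ • A + k₀ • (1 : Matrix (Fin 3) (Fin 3) ℝ)) i j) ∧
    AlgPos A := by
  obtain ⟨a, ha⟩ : ∃ x, A 0 0 = x := ⟨_, rfl⟩
  obtain ⟨b, hb⟩ : ∃ x, A 0 1 = x := ⟨_, rfl⟩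
  obtain ⟨c, hc⟩ : ∃ x, A 1 0 = x := ⟨_, rfl⟩
  obtain ⟨d, hd⟩ : ∃ x, A 1 2 = x := ⟨_, rfl⟩
  obtain ⟨e, he⟩ : ∃ x, A 2 1 = x := ⟨_, rfl⟩
  rw [ha] at h11; rw [hb] at h12; rw [hc] at h21; rw [hd] at h23; rw [he] at h32
  have h2 : (⟨2, by omega⟩ : Fin 3) = 2 := rfl
  have key : ∀ i j, 0 <
      ((-1 : ℝ) • A ^ 2 + (a / 2) • A +
        (|a * a + b * c - a / 2 * a| + |c * b + d * e| + |e * d| + 1) •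
          (1 : Matrix (Fin 3) (Fin 3) ℝ)) i j := by
    intro i j
    have hab1 := abs_nonneg (a * a + b * c - a / 2 * a)
    have hab2 := abs_nonneg (c * b + d * e)
    have hab3 := abs_nonneg (e * d)
    have hle1 := le_abs_self (a * a + b * c - a / 2 * a)
    have hle2 := le_abs_self (c * b + d * e)
    have hle3 := le_abs_self (e * d)
    fin_cases i <;> fin_cases j <;>
      simp only [pow_two, Matrix.add_apply, Matrix.smul_apply, Matrix.mul_apply,
        Fin.sum_univ_three, Matrix.one_apply, smul_eq_mul, h2, Fin.mk_zero, Fin.mk_one] <;>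
      simp only [ha, hb, hc, hd, he, h13, h22, h31, h33, Fin.reduceEq, reduceIte,
        if_true, if_false, mul_zero, zero_mul, add_zero, zero_add, mul_one] <;>
      nlinarith [mul_pos h23 h32, mul_pos_of_neg_of_neg h12 h21, mul_pos h11 h23,
        mul_pos h11 h32, mul_neg_of_pos_of_neg h11 h12, mul_neg_of_pos_of_neg h11 h21]
  have heq : (Polynomial.aeval A)
      (C (-1 : ℝ) * X ^ 2 + C (a / 2) * X +
        C (|a * a + b * c - a / 2 * a| + |c * b + d * e| + |e * d| + 1))
      = (-1 : ℝ) • A ^ 2 + (a / 2) • A +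
        (|a * a + b * c - a / 2 * a| + |c * b + d * e| + |e * d| + 1) •
          (1 : Matrix (Fin 3) (Fin 3) ℝ) := by
    rw [map_add, map_add, _root_.map_mul, _root_.map_mul, aeval_C, aeval_C, aeval_C,
      map_pow, aeval_X, ← Algebra.smul_def, ← Algebra.smul_def,
      Algebra.algebraMap_eq_smul_one]
  refine ⟨⟨_, a / 2, -1, by norm_num, by positivity, ?_, key⟩, ⟨_, fun i j => heq ▸ key i j⟩⟩
  rw [ha]
  rw [div_neg, div_one]
  linarith
end

section
/- The 3×3 real matrix A with a₁₁ = a₁₂ = a₂₃ = a₃₁ = 1, a₂₁ = -1, and all other entries zero is not algebraically positive, while the 3×3 real matrix B with b₁₁ = b₁₂ = 1, b₂₁ = -1, b₂₃ = b₃₁ = 10, and all other entries zero is algebraically positive. -/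
open Polynomial Matrix

private lemma powA_fix (n : ℕ) :
    (!![1, 1, 0; -1, 0, 1; 1, 0, 0] : Matrix (Fin 3) (Fin 3) ℝ) ^ n *ᵥ ![1, 0, 1]
      = ![1, 0, 1] := by
  induction n with
  | zero => simp
  | succ n ih =>
      have h : (!![1, 1, 0; -1, 0, 1; 1, 0, 0] : Matrix (Fin 3) (Fin 3) ℝ) *ᵥ ![1, 0, 1]
          = ![1, 0, 1] := by
        funext i
        fin_cases i <;>
          simp [Matrix.mulVec, dotProduct, Fin.sum_univ_succ]
      rw [pow_succ, ← Matrix.mulVec_mulVec, h, ih]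

private lemma aevalA_fix (p : Polynomial ℝ) :
    (Polynomial.aeval (!![1, 1, 0; -1, 0, 1; 1, 0, 0] : Matrix (Fin 3) (Fin 3) ℝ) p)
      *ᵥ ![1, 0, 1] = (p.eval 1) • ![1, 0, 1] := by
  induction p using Polynomial.induction_on' with
  | add p q hp hq =>
      simp [Matrix.add_mulVec, hp, hq, add_smul]
  | monomial n a =>
      rw [Polynomial.aeval_monomial]
      rw [show (algebraMap ℝ (Matrix (Fin 3) (Fin 3) ℝ)) a = a • (1 : Matrix (Fin 3) (Fin 3) ℝ)
        from by simp [Algebra.algebraMap_eq_smul_one]]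
      rw [smul_mul_assoc, one_mul, Matrix.smul_mulVec, powA_fix]
      simp [Polynomial.eval_monomial]

theorem sp82_allows_not_requires :
    ¬ AlgPos (!![1, 1, 0; -1, 0, 1; 1, 0, 0] : Matrix (Fin 3) (Fin 3) ℝ) ∧
    AlgPos (!![1, 1, 0; -1, 0, 10; 10, 0, 0] : Matrix (Fin 3) (Fin 3) ℝ) := by
  constructor
  · rintro ⟨p, hp⟩
    have h := congrFun (aevalA_fix p) 1
    set M := Polynomial.aeval (!![1, 1, 0; -1, 0, 1; 1, 0, 0] : Matrix (Fin 3) (Fin 3) ℝ) p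
    have h10 := hp 1 0
    have h12 := hp 1 2
    have hM : M 1 0 + M 1 2 = 0 := by
      have := h
      simp [Matrix.mulVec, dotProduct, Fin.sum_univ_succ] at this
      linarith [this]
    linarith
  · refine ⟨X ^ 3 + X ^ 2 + X + X + 1, fun i j => ?_⟩
    have hB : Polynomial.aeval (!![1, 1, 0; -1, 0, 10; 10, 0, 0] : Matrix (Fin 3) (Fin 3) ℝ)
        ((X ^ 3 + X ^ 2 + X + X + 1 : Polynomial ℝ))
        = !![102, 3, 20; 197, 99, 10; 30, 20, 101] := by
      simp only [map_add, map_pow, aeval_X, _root_.map_one]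
      ext i j
      fin_cases i <;> fin_cases j <;>
        simp [pow_succ, Matrix.mul_apply, Fin.sum_univ_succ, Matrix.one_apply] <;> norm_num
    rw [hB]
    fin_cases i <;> fin_cases j <;> norm_num
end

section
/- Let A be a 3×3 real matrix with digraph a₁₂, a₂₁, a₂₃, a₃₁ nonzero, zero elsewhere except a₃₃, where a₁₂ > 0, a₂₁ < 0, a₂₃ > 0, a₃₁ > 0, a₃₃ < 0. Then A is algebraically positive if and only if a₂₁a₃₃ < a₂₃a₃₁. -/
open Polynomial Matrix

set_option maxHeartbeats 1000000

theorem sp93_iff (A : Matrix (Fin 3) (Fin 3) ℝ)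
    (h12 : 0 < A 0 1) (h21 : A 1 0 < 0) (h23 : 0 < A 1 2)
    (h31 : 0 < A 2 0) (h33 : A 2 2 < 0)
    (h11 : A 0 0 = 0) (h13 : A 0 2 = 0) (h22 : A 1 1 = 0) (h32 : A 2 1 = 0) :
    AlgPos A ↔ A 1 0 * A 2 2 < A 1 2 * A 2 0 := by
  constructor
  · rintro ⟨p, hp⟩
    have hmon := A.charpoly_monic
    set r := p %ₘ A.charpoly with hr
    have hdeg : r.natDegree < 3 := by
      rcases eq_or_ne r 0 with h | h
      · simp [h]
      · have h1 := Polynomial.degree_modByMonic_lt p hmon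
        rw [Polynomial.natDegree_lt_iff_degree_lt h]
        rw [← hr] at h1
        calc r.degree < A.charpoly.degree := h1
          _ = (3 : ℕ) := by rw [Matrix.charpoly_degree_eq_dim]; norm_num
    have haev : aeval A r = aeval A p := by
      conv_rhs => rw [← Polynomial.modByMonic_add_div p A.charpoly]
      simp [map_add, _root_.map_mul, Matrix.aeval_self_charpoly, hr]
    have hsum : aeval A r = r.coeff 0 • (1 : Matrix (Fin 3) (Fin 3) ℝ) + r.coeff 1 • A + r.coeff 2 • (A * A) := by
      rw [Polynomial.aeval_eq_sum_range' hdeg]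
      simp [Finset.sum_range_succ, pow_succ]
    have e01 := hp 0 1
    have e21 := hp 2 1
    have e20 := hp 2 0
    have e10 := hp 1 0
    rw [← haev, hsum] at e01 e21 e20 e10
    simp [Matrix.add_apply, Matrix.smul_apply, Matrix.one_apply, Matrix.mul_apply,
      Fin.sum_univ_three, h11, h13, h22, h32] at e01 e21 e20 e10
    set c0 := r.coeff 0; set c1 := r.coeff 1; set c2 := r.coeff 2
    have hc1 : 0 < c1 := by nlinarith
    have hc2 : 0 < c2 := by nlinarith [e21, mul_pos h31 h12]
    nlinarith [mul_pos hc2 hc2, mul_pos hc1 hc2, e10, e20, mul_pos h12 h31]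

  · intro hlt
    show ∃ p : Polynomial ℝ, ∀ i j, 0 < (Polynomial.aeval A p) i j
    set M : ℝ := 1 + A 0 1 * (A 1 2 * A 2 0 - A 1 0 * A 2 2) with hMdef
    have hM1 : 1 ≤ M := by nlinarith
    have hM : (0:ℝ) ≤ M := by linarith
    set f : ℝ → ℝ := fun x => x^3 - A 2 2 * x^2 - A 0 1 * A 1 0 * x
        + A 0 1 * (A 1 0 * A 2 2 - A 1 2 * A 2 0) with hfdef
    have hcont : ContinuousOn f (Set.Icc 0 M) := by
      apply Continuous.continuousOn; fun_prop
    have hf0 : f 0 < 0 := by simp only [hfdef]; nlinarith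
    have hfM : 0 < f M := by
      simp only [hfdef]
      nlinarith [mul_nonneg (mul_nonneg hM (by linarith : (0:ℝ) ≤ M - 1)) (by linarith : (0:ℝ) ≤ M + 1),
        sq_nonneg M, mul_nonneg (mul_nonneg hM hM) (le_of_lt (neg_pos.2 h33)),
        mul_nonneg hM (le_of_lt (mul_pos h12 (neg_pos.2 h21)))]
    obtain ⟨l, hlmem, hfl⟩ := intermediate_value_Icc hM hcont ⟨hf0.le, hfM.le⟩
    have hl0 : 0 < l := by
      have hne : l ≠ 0 := by intro h; rw [h] at hfl; exact hf0.ne hfl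
      exact lt_of_le_of_ne hlmem.1 (Ne.symm hne)
    have hfl' : l^3 - A 2 2 * l^2 - A 0 1 * A 1 0 * l
        + A 0 1 * (A 1 0 * A 2 2 - A 1 2 * A 2 0) = 0 := hfl
    have hle : 0 < l - A 2 2 := by linarith
    have key : A 0 1 * (A 1 2 * A 2 0 + (l - A 2 2) * A 1 0) = l^2 * (l - A 2 2) := by
      linear_combination (-1 : ℝ) * hfl'
    refine ⟨X^2 + C (l - A 2 2) * X + C (l^2 - A 2 2 * l - A 0 1 * A 1 0), ?_⟩
    have hP : aeval A (X^2 + C (l - A 2 2) * X + C (l^2 - A 2 2 * l - A 0 1 * A 1 0))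
        = (A*A) + (l - A 2 2) • A + (l^2 - A 2 2 * l - A 0 1 * A 1 0) • (1 : Matrix (Fin 3) (Fin 3) ℝ) := by
      simp only [map_add, _root_.map_mul, map_pow, aeval_X, aeval_C,
        Algebra.algebraMap_eq_smul_one, sq, smul_mul_assoc, one_mul]
    rw [hP]
    intro i j
    fin_cases i <;> fin_cases j <;>
      simp [Matrix.add_apply, Matrix.smul_apply, Matrix.mul_apply, Matrix.one_apply,
        Fin.sum_univ_three, h11, h13, h22, h32] <;>
      nlinarith [key, hl0, hle, mul_pos hl0 hl0, mul_pos (mul_pos hl0 hl0) hle,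
        mul_pos hle h12, mul_pos h12 h23, mul_pos h23 hl0, mul_pos h31 hl0,
        mul_pos h31 h12, mul_pos hl0 (neg_pos.2 h33), mul_pos h12 (neg_pos.2 h21), h12]
end

section
/- Let A be a 3×3 real matrix with a₁₂ > 0, a₂₁ > 0, a₂₃ > 0, a₃₁ > 0, a₃₂ < 0, and all other entries zero. Then A is algebraically positive if and only if a₂₁a₃₂² < a₁₂a₃₁². -/
open Polynomial Matrix

set_option maxHeartbeats 1000000

section aux

lemma sp102_decomp (A : Matrix (Fin 3) (Fin 3) ℝ) (c1 c0 : ℝ)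
    (hCH : A * A * A = c1 • A + c0 • (1 : Matrix (Fin 3) (Fin 3) ℝ)) (p : Polynomial ℝ) :
    ∃ α β γ : ℝ, Polynomial.aeval A p = α • (1 : Matrix (Fin 3) (Fin 3) ℝ) + β • A + γ • (A * A) := by
  induction p using Polynomial.induction_on with
  | C r =>
    exact ⟨r, 0, 0, by simp [Algebra.algebraMap_eq_smul_one]⟩
  | add p q hp hq =>
    obtain ⟨a1, b1, c1', h1⟩ := hp
    obtain ⟨a2, b2, c2', h2⟩ := hq
    refine ⟨a1 + a2, b1 + b2, c1' + c2', ?_⟩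
    simp [h1, h2, add_smul]
    abel
  | monomial n r ih =>
    obtain ⟨α, β, γ, h⟩ := ih
    refine ⟨γ * c0, α + γ * c1, β, ?_⟩
    have h0 : (Polynomial.C r * Polynomial.X ^ (n + 1) : Polynomial ℝ)
        = (Polynomial.C r * Polynomial.X ^ n) * Polynomial.X := by ring
    rw [h0, _root_.map_mul, Polynomial.aeval_X, h]
    rw [add_mul, add_mul, Matrix.smul_mul, Matrix.smul_mul, Matrix.smul_mul, one_mul, hCH]
    rw [smul_add, smul_smul, smul_smul]
    module

end aux

theorem sp102_iff (A : Matrix (Fin 3) (Fin 3) ℝ)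
    (h12 : 0 < A 0 1) (h21 : 0 < A 1 0) (h23 : 0 < A 1 2)
    (h31 : 0 < A 2 0) (h32 : A 2 1 < 0)
    (h11 : A 0 0 = 0) (h13 : A 0 2 = 0) (h22 : A 1 1 = 0) (h33 : A 2 2 = 0) :
    AlgPos A ↔ A 1 0 * (A 2 1) ^ 2 < A 0 1 * (A 2 0) ^ 2 := by
  set a := A 0 1 with ha
  set b := A 1 0 with hb
  set c := A 1 2 with hc
  set d := A 2 0 with hd0
  set e := A 2 1 with he0
  have hCH : A * A * A = (a * b + c * e) • A + (a * c * d) • (1 : Matrix (Fin 3) (Fin 3) ℝ) := by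
    ext i j
    fin_cases i <;> fin_cases j <;>
      simp [Matrix.mul_apply, Fin.sum_univ_three, Matrix.one_apply, h11, h13, h22, h33,
        ← ha, ← hb, ← hc, ← hd0, ← he0] <;>
      first | ring1 | exact Or.inl (mul_comm _ _)
  constructor
  · rintro ⟨p, hp⟩
    obtain ⟨α, β, γ, hdec⟩ := sp102_decomp A _ _ hCH p
    have E : ∀ i j, (Polynomial.aeval A p) i j
        = α * (1 : Matrix (Fin 3) (Fin 3) ℝ) i j + β * A i j + γ * (A * A) i j := by
      intro i j; rw [hdec]; simp
    have h01 := hp 0 1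
    have h02 := hp 0 2
    have h20 := hp 2 0
    have h21' := hp 2 1
    rw [E] at h01 h02 h20 h21'
    simp [Matrix.mul_apply, Fin.sum_univ_three, Matrix.one_apply, h11, h13, h22, h33] at h01 h02 h20 h21'
    -- h01 : 0 < β * a ; h02 : 0 < γ * (a*c) ; h20 : 0 < β*d + γ*(e*b) ; h21' : 0 < β*e + γ*(d*a)
    have hβ : 0 < β := by nlinarith [h01]
    have hγ : 0 < γ := by nlinarith [h02, mul_pos h12 h23]
    nlinarith [mul_pos h31 h21', mul_pos (neg_pos.mpr h32) h20, hγ]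
  · intro h
    have key : ∀ α β γ : ℝ, 0 < β → 0 < γ →
        0 < α + γ * (a * b) → 0 < α + γ * (b * a + c * e) → 0 < α + γ * (e * c) →
        0 < β * d + γ * (e * b) → 0 < β * e + γ * (d * a) → AlgPos A := by
      intro α β γ hβ hγ k00 k11 k22 k20 k21''
      refine ⟨Polynomial.C α + Polynomial.C β * Polynomial.X + Polynomial.C γ * Polynomial.X ^ 2, ?_⟩
      have hq : Polynomial.aeval A (Polynomial.C α + Polynomial.C β * Polynomial.X
          + Polynomial.C γ * Polynomial.X ^ 2)
          = α • (1 : Matrix (Fin 3) (Fin 3) ℝ) + β • A + γ • (A * A) := by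
        simp [Algebra.algebraMap_eq_smul_one, smul_mul_assoc, pow_two]
      intro i j
      rw [hq]
      have E : (α • (1 : Matrix (Fin 3) (Fin 3) ℝ) + β • A + γ • (A * A)) i j
          = α * (1 : Matrix (Fin 3) (Fin 3) ℝ) i j + β * A i j + γ * (A * A) i j := by simp
      rw [E]
      fin_cases i <;> fin_cases j <;>
        simp [Matrix.mul_apply, Fin.sum_univ_three, Matrix.one_apply, h11, h13, h22, h33,
          ← ha, ← hb, ← hc, ← hd0, ← he0] <;>
        linarith [mul_pos hβ h12, mul_pos hγ (mul_pos h12 h23), mul_pos hβ h21,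
          mul_pos hγ (mul_pos h23 h31), mul_pos hβ h23, k00, k11, k22, k20, k21'']
    have he : 0 < -e := neg_pos.mpr h32
    have hee : 0 < e * e := mul_pos_of_neg_of_neg h32 h32
    apply key (1 + (d * (-e)) * (c * (-e))) ((b * (e * e) + a * (d * d)) / 2) (d * (-e))
    · nlinarith [mul_pos h21 hee, mul_pos h12 (mul_pos h31 h31)]
    · exact mul_pos h31 he
    · nlinarith [mul_pos (mul_pos h31 he) (mul_pos h23 he),
        mul_pos (mul_pos h31 he) (mul_pos h12 h21)]
    · nlinarith [mul_pos (mul_pos h31 he) (mul_pos h21 h12)]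
    · nlinarith []
    · nlinarith [mul_pos h31 (sub_pos.mpr h)]
    · nlinarith [mul_pos he (sub_pos.mpr h)]
end

section
/- Let A be a 3×3 real matrix with a₁₁ > 0, a₁₂ > 0, a₂₁ > 0, a₂₃ < 0, a₃₂ < 0, a₃₃ > 0, and all other entries zero. Then A is algebraically positive if and only if a₃₃ > a₁₁. -/
open Polynomial Matrix

set_option maxHeartbeats 1000000 in
theorem sp132_iff (A : Matrix (Fin 3) (Fin 3) ℝ)
    (h11 : 0 < A 0 0) (h12 : 0 < A 0 1) (h21 : 0 < A 1 0)
    (h23 : A 1 2 < 0) (h32 : A 2 1 < 0) (h33 : 0 < A 2 2)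
    (h13 : A 0 2 = 0) (h22 : A 1 1 = 0) (h31 : A 2 0 = 0) :
    AlgPos A ↔ A 0 0 < A 2 2 := by
  constructor
  · rintro ⟨p, hp⟩
    have hcomm : A * aeval A p = aeval A p * A := by
      have h1 : aeval A (X * p) = aeval A (p * X) := by rw [mul_comm]
      simpa using h1
    have key := congrFun (congrFun hcomm 0) 2
    simp [Matrix.mul_apply, Fin.sum_univ_three, h13] at key
    by_contra hle
    push_neg at hle
    nlinarith [hp 0 1, hp 0 2, hp 1 2, mul_pos h12 (hp 1 2),
      mul_pos (hp 0 1) (neg_pos.mpr h23),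
      mul_nonneg (le_of_lt (hp 0 2)) (sub_nonneg.mpr hle)]
  · intro haf
    obtain ⟨lam, hal, hlf, hq⟩ :
        ∃ lam : ℝ, A 0 0 < lam ∧ lam < A 2 2 ∧
          lam * (lam - A 0 0) < A 0 1 * A 1 0 := by
      refine ⟨A 0 0 + min ((A 2 2 - A 0 0)/2) (A 0 1 * A 1 0 / (2 * A 2 2)), ?_, ?_, ?_⟩
      · exact lt_add_of_pos_right _ (lt_min (by linarith) (by positivity))
      · have := min_le_left ((A 2 2 - A 0 0)/2) (A 0 1 * A 1 0 / (2 * A 2 2))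
        linarith
      · set m := min ((A 2 2 - A 0 0)/2) (A 0 1 * A 1 0 / (2 * A 2 2)) with hm
        have hmpos : 0 < m := lt_min (by linarith) (by positivity)
        have h1 : m ≤ A 0 1 * A 1 0 / (2 * A 2 2) := min_le_right _ _
        have h2 : A 0 0 + m < A 2 2 := by
          have := min_le_left ((A 2 2 - A 0 0)/2) (A 0 1 * A 1 0 / (2 * A 2 2))
          rw [hm]; linarith
        have hlpos : 0 < A 0 0 + m := by linarith
        have h3 : (A 0 0 + m) * m ≤ (A 0 0 + m) * (A 0 1 * A 1 0 / (2 * A 2 2)) :=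
          mul_le_mul_of_nonneg_left h1 (le_of_lt hlpos)
        have h4 : (A 0 0 + m) * (A 0 1 * A 1 0 / (2 * A 2 2)) <
            A 2 2 * (A 0 1 * A 1 0 / (2 * A 2 2)) :=
          mul_lt_mul_of_pos_right h2 (by positivity)
        have h5 : A 2 2 * (A 0 1 * A 1 0 / (2 * A 2 2)) = A 0 1 * A 1 0 / 2 := by
          field_simp
        have h6 : 0 < A 0 1 * A 1 0 := mul_pos h12 h21
        have : (A 0 0 + m) * (A 0 0 + m - A 0 0) = (A 0 0 + m) * m := by ring
        rw [this]; linarith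
    have hlpos : 0 < lam := lt_trans h11 hal
    obtain ⟨t, ht⟩ : ∃ t : ℝ, t = -(lam^2 - (A 0 0 + A 2 2)*lam + A 0 0 * A 2 2
        - A 0 1 * A 1 0 - A 1 2 * A 2 1) := ⟨_, rfl⟩
    obtain ⟨s, hs⟩ : ∃ s : ℝ, s = A 0 0 + A 2 2 - lam := ⟨_, rfl⟩
    refine ⟨C t + C s * X - X^2, ?_⟩
    have hA : aeval A (C t + C s * X - X^2) =
        t • (1 : Matrix (Fin 3) (Fin 3) ℝ) + s • A - A * A := by
      simp [Algebra.algebraMap_eq_smul_one, smul_mul_assoc, sq]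
    rw [hA]
    intro i j
    fin_cases i <;> fin_cases j <;>
      simp [Matrix.mul_apply, Fin.sum_univ_three, Matrix.one_apply, h13, h22, h31] <;>
      nlinarith [mul_pos hlpos (sub_pos.mpr hlf),
        mul_pos (neg_pos.mpr h23) (neg_pos.mpr h32),
        mul_pos h12 (sub_pos.mpr hlf), mul_pos h21 (sub_pos.mpr hlf),
        mul_pos (sub_pos.mpr hal) (sub_pos.mpr hlf),
        mul_pos (neg_pos.mpr h23) (sub_pos.mpr hal),
        mul_pos (neg_pos.mpr h32) (sub_pos.mpr hal),
        mul_pos h12 h21, mul_pos h12 (neg_pos.mpr h23),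
        mul_pos h21 (neg_pos.mpr h32), hq, ht, hs]
end

section
/- Let A be a 3×3 real matrix with a₁₁ > 0, a₁₂ > 0, a₂₁ < 0, a₂₃ > 0, a₃₁ > 0, a₃₃ > 0, and all other entries zero. Then A is algebraically positive if and only if a₁₁a₂₁ - a₃₃a₂₁ > -a₂₃a₃₁. -/
open Polynomial Matrix

set_option maxHeartbeats 1000000 in
theorem sp152_iff (A : Matrix (Fin 3) (Fin 3) ℝ)
    (h11 : 0 < A 0 0) (h12 : 0 < A 0 1) (h21 : A 1 0 < 0)
    (h23 : 0 < A 1 2) (h31 : 0 < A 2 0) (h33 : 0 < A 2 2)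
    (h13 : A 0 2 = 0) (h22 : A 1 1 = 0) (h32 : A 2 1 = 0) :
    AlgPos A ↔ A 0 0 * A 1 0 - A 2 2 * A 1 0 > -(A 1 2 * A 2 0) := by
  constructor
  · rintro ⟨p, hp⟩
    have hm := A.charpoly_monic
    have h1 : aeval A p = ∑ i ∈ Finset.range 3, (p %ₘ A.charpoly).coeff i • A ^ i := by
      have h1' : aeval A p = aeval A (p %ₘ A.charpoly) := by
        conv_lhs => rw [← modByMonic_add_div p A.charpoly]
        simp [aeval_self_charpoly]
      have hdeg : (p %ₘ A.charpoly).natDegree < 3 := by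
        by_cases h0 : p %ₘ A.charpoly = 0
        · simp [h0]
        · have := degree_modByMonic_lt p hm
          rw [Matrix.charpoly_degree_eq_dim] at this
          simpa [Polynomial.natDegree_lt_iff_degree_lt h0] using this
      rw [h1', aeval_eq_sum_range' hdeg]
    set c0 := (p %ₘ A.charpoly).coeff 0
    set c1 := (p %ₘ A.charpoly).coeff 1
    set c2 := (p %ₘ A.charpoly).coeff 2
    have key : ∀ i j, (aeval A p) i j =
        c0 * (1 : Matrix (Fin 3) (Fin 3) ℝ) i j + c1 * A i j + c2 * (A * A) i j := by
      intro i j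
      rw [h1]
      simp [Finset.sum_range_succ, pow_succ, Matrix.add_apply, Matrix.smul_apply]
      rfl
    have e02 := hp 0 2
    have e12 := hp 1 2
    have e10 := hp 1 0
    rw [key] at e02 e12 e10
    simp [Matrix.mul_apply, Fin.sum_univ_three, Matrix.one_apply, h13, h22, h32] at e02 e12 e10
    have hc2 : 0 < c2 := by nlinarith [mul_pos h12 h23]
    have h12' : 0 < c1 + c2 * A 2 2 := by nlinarith [e12, h23]
    nlinarith [e10, mul_pos (neg_pos.mpr h21) h12', hc2]
  · intro h
    have hc : 0 < -(A 1 0) := by linarith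
    obtain ⟨β, hβa, hβf, hβU⟩ : ∃ β : ℝ, 0 < β + A 0 0 ∧ 0 < β + A 2 2 ∧
        0 < A 1 0 * β + (A 1 0 * A 0 0 + A 1 2 * A 2 0) := by
      refine ⟨(max (-(A 0 0)) (-(A 2 2)) + (A 1 2 * A 2 0 / (-(A 1 0)) - A 0 0)) / 2, ?_, ?_, ?_⟩
      · have h1 := le_max_left (-(A 0 0)) (-(A 2 2))
        have h2 : -(A 0 0) < A 1 2 * A 2 0 / (-(A 1 0)) - A 0 0 := by
          have : 0 < A 1 2 * A 2 0 / (-(A 1 0)) := div_pos (mul_pos h23 h31) hc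
          linarith
        linarith
      · have h1 := le_max_right (-(A 0 0)) (-(A 2 2))
        have h2 : -(A 2 2) < A 1 2 * A 2 0 / (-(A 1 0)) - A 0 0 := by
          rw [lt_sub_iff_add_lt, lt_div_iff₀ hc]
          nlinarith
        linarith
      · have h2 : max (-(A 0 0)) (-(A 2 2)) < A 1 2 * A 2 0 / (-(A 1 0)) - A 0 0 := by
          rw [max_lt_iff]
          constructor
          · have : 0 < A 1 2 * A 2 0 / (-(A 1 0)) := div_pos (mul_pos h23 h31) hc
            linarith
          · rw [lt_sub_iff_add_lt, lt_div_iff₀ hc]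
            nlinarith
        have h3 : (max (-(A 0 0)) (-(A 2 2)) + (A 1 2 * A 2 0 / (-(A 1 0)) - A 0 0)) / 2
            < A 1 2 * A 2 0 / (-(A 1 0)) - A 0 0 := by linarith
        rw [lt_sub_iff_add_lt, lt_div_iff₀ hc] at h3
        nlinarith [h3]
    obtain ⟨α, hα1, hα2, hα3⟩ : ∃ α : ℝ,
        0 < α + (β * A 0 0 + (A 0 0 * A 0 0 + A 0 1 * A 1 0)) ∧
        0 < α + A 0 1 * A 1 0 ∧
        0 < α + (β * A 2 2 + A 2 2 * A 2 2) := by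
      refine ⟨1 + |β * A 0 0 + (A 0 0 * A 0 0 + A 0 1 * A 1 0)| + |A 0 1 * A 1 0|
        + |β * A 2 2 + A 2 2 * A 2 2|, ?_, ?_, ?_⟩ <;>
      · have habs1 := neg_abs_le (β * A 0 0 + (A 0 0 * A 0 0 + A 0 1 * A 1 0))
        have habs2 := neg_abs_le (A 0 1 * A 1 0)
        have habs3 := neg_abs_le (β * A 2 2 + A 2 2 * A 2 2)
        have h1 := abs_nonneg (β * A 0 0 + (A 0 0 * A 0 0 + A 0 1 * A 1 0))
        have h2 := abs_nonneg (A 0 1 * A 1 0)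
        have h3 := abs_nonneg (β * A 2 2 + A 2 2 * A 2 2)
        linarith
    refine ⟨C α + C β * X + X ^ 2, fun i j => ?_⟩
    fin_cases i <;> fin_cases j <;>
      simp [Matrix.add_apply, Matrix.smul_apply, sq, Matrix.mul_apply, Fin.sum_univ_three,
        Matrix.one_apply, Matrix.algebraMap_matrix_apply, h13, h22, h32, smul_eq_mul] <;>
      nlinarith [mul_pos h12 hβa, mul_pos h23 hβf, mul_pos h31 hβa, mul_pos h31 h33,
        mul_pos h12 h23, mul_pos h23 h31, mul_pos h12 h11, hα1, hα2, hα3, hβU]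
end

section
/- Every 3×3 sign pattern whose first row is all negative, with a positive entry in position (2,3), a negative entry in (2,1), positive entries in (3,1) and (3,2), and (3,3) zero, does not allow algebraic positivity: no real matrix A with a₁₁ < 0, a₁₂ < 0, a₁₃ < 0, a₂₁ < 0, a₂₃ > 0, a₃₁ > 0, a₃₂ > 0, a₂₂ arbitrary sign, a₃₃ = 0 is algebraically positive. -/
open Polynomial Matrix

theorem negRow_pattern_not_algPos (A : Matrix (Fin 3) (Fin 3) ℝ)
    (h11 : A 0 0 < 0) (h12 : A 0 1 < 0) (h13 : A 0 2 < 0)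
    (h21 : A 1 0 < 0) (h23 : 0 < A 1 2)
    (h31 : 0 < A 2 0) (h32 : 0 < A 2 1) (h33 : A 2 2 = 0) :
    ¬ AlgPos A := by
  rintro ⟨p, hp⟩
  have hmonic : (Matrix.charpoly A).Monic := A.charpoly_monic
  have hdeg : (Matrix.charpoly A).degree = (3 : ℕ) := by
    simpa using A.charpoly_degree_eq_dim
  set r : Polynomial ℝ := p %ₘ (Matrix.charpoly A) with hr
  have haeval : Polynomial.aeval A p = Polynomial.aeval A r := by
    conv_lhs => rw [← Polynomial.modByMonic_add_div p (Matrix.charpoly A)]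
    rw [map_add, _root_.map_mul, Matrix.aeval_self_charpoly]
    simp
    rfl
  have hlt : r.natDegree < 3 := by
    rcases eq_or_ne r 0 with h0 | h0
    · simp [h0]
    · have hd := Polynomial.degree_modByMonic_lt p hmonic
      rw [← hr, hdeg] at hd
      exact (Polynomial.natDegree_lt_iff_degree_lt h0).2 hd
  have hsum : Polynomial.aeval A r = ∑ i ∈ Finset.range 3, r.coeff i • A ^ i :=
    Polynomial.aeval_eq_sum_range' hlt A
  have hMeq : Polynomial.aeval A p
      = r.coeff 0 • (1 : Matrix (Fin 3) (Fin 3) ℝ) + r.coeff 1 • A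
        + r.coeff 2 • (A * A) := by
    rw [haeval, hsum]
    simp [Finset.sum_range_succ, pow_succ, pow_zero, Matrix.one_mul]
  have hod : ∀ i j : Fin 3, i ≠ j → (Polynomial.aeval A p) i j
      = r.coeff 1 * A i j
        + r.coeff 2 * (A i 0 * A 0 j + A i 1 * A 1 j + A i 2 * A 2 j) := by
    intro i j hij
    rw [hMeq]
    simp [Matrix.add_apply, Matrix.smul_apply, Matrix.mul_apply,
      Fin.sum_univ_three, Matrix.one_apply_ne hij, smul_eq_mul]
  have h10 := hp 1 0
  have h12' := hp 1 2
  have h02 := hp 0 2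
  have h20 := hp 2 0
  rw [hod 1 0 (by decide)] at h10
  rw [hod 1 2 (by decide)] at h12'
  rw [hod 0 2 (by decide)] at h02
  rw [hod 2 0 (by decide)] at h20
  set c1 := r.coeff 1 with hc1
  set c2 := r.coeff 2 with hc2
  set a := A 0 0; set b := A 0 1; set c := A 0 2
  set d := A 1 0; set e := A 1 1; set f := A 1 2
  set g := A 2 0; set h := A 2 1
  rw [h33] at h12' h02 h20
  -- K1 : f*M10 + (-d)*M12 = c2 * (f*(d*a) + f*(f*g) - d*(d*c)) > 0
  have hK1 : 0 < c2 * (f * (d * a) + f * (f * g) - d * (d * c)) := by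
    have e1 := mul_pos h23 h10
    have e2 := mul_pos (neg_pos.2 h21) h12'
    nlinarith [e1, e2]
  have hR1 : 0 < f * (d * a) + f * (f * g) - d * (d * c) := by
    have t1 : 0 < f * (d * a) := mul_pos h23 (mul_pos_of_neg_of_neg h21 h11)
    have t2 : 0 < f * (f * g) := mul_pos h23 (mul_pos h23 h31)
    have t3 : d * (d * c) < 0 := mul_neg_of_neg_of_pos h21 (mul_pos_of_neg_of_neg h21 h13)
    linarith
  have hr2pos : 0 < c2 := by
    rcases mul_pos_iff.mp hK1 with ⟨h1, _⟩ | ⟨_, h2⟩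
    · exact h1
    · linarith
  -- K2 : g*M02 + (-c)*M20 = c2 * (g*(b*f) - c*(h*d)) > 0
  have hK2 : 0 < c2 * (g * (b * f) - c * (h * d)) := by
    have e1 := mul_pos h31 h02
    have e2 := mul_pos (neg_pos.2 h13) h20
    nlinarith [e1, e2]
  have hR2 : g * (b * f) - c * (h * d) < 0 := by
    have t1 : g * (b * f) < 0 := mul_neg_of_pos_of_neg h31 (mul_neg_of_neg_of_pos h12 h23)
    have t2 : 0 < c * (h * d) := mul_pos_of_neg_of_neg h13 (mul_neg_of_pos_of_neg h32 h21)
    linarith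
  nlinarith [mul_pos hr2pos (neg_pos.2 hR2)]
end

section
/- Let S be the 3×3 sign pattern with (S)₁₂ = +, (S)₂₁ = +, (S)₂₃ = -, (S)₃₁ = +, (S)₃₃ = +, and all other entries 0. Then no real matrix X whose entries have these signs is algebraically positive; i.e., S does not allow algebraic positivity. -/
open Polynomial Matrix

theorem pattern_S_not_algPos (X : Matrix (Fin 3) (Fin 3) ℝ)
    (h12 : 0 < X 0 1) (h21 : 0 < X 1 0) (h23 : X 1 2 < 0)
    (h31 : 0 < X 2 0) (h33 : 0 < X 2 2)
    (h11 : X 0 0 = 0) (h13 : X 0 2 = 0) (h22 : X 1 1 = 0) (h32 : X 2 1 = 0) :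
    ¬ AlgPos X := by
  rintro ⟨p, hp⟩
  set P := Polynomial.aeval X p with hP
  have hcomm : X * P = P * X := by
    have h := congrArg (Polynomial.aeval X) (mul_comm Polynomial.X p)
    simpa only [_root_.map_mul, Polynomial.aeval_X] using h
  -- entry (0,1): X01 * P11 = P00 * X01
  have e01 : (X * P) 0 1 = (P * X) 0 1 := by rw [hcomm]
  have e10 : (X * P) 1 0 = (P * X) 1 0 := by rw [hcomm]
  rw [Matrix.mul_apply, Matrix.mul_apply, Fin.sum_univ_three, Fin.sum_univ_three] at e01 e10
  simp only [h11, h13, h22, h32] at e01 e10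
  have hP00 : P 1 1 = P 0 0 := by
    have ha := h12.ne'
    nlinarith [hp 0 0, hp 1 1]
  -- from e10 : X10 * P00 + X12 * P20 = P11 * X10 + P12 * X20
  nlinarith [hp 2 0, hp 1 2, mul_pos h21 (hp 0 0)]
end
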